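/- arXiv:2211.05068 — 2 statements merged into one kernel-verified Lean document; each statement's English description precedes it below -/
import Mathlib

section
/- Let α be a self-dual basis of F_{q^m} over F_q, let 0 ≤ k ≤ m, and let e be an integer with 0 ≤ e ≤ k and e ≤ m−1. Then the F_{q^m}-dimension of the e-Galois hull of the Gabidulin code G_k(α) equals min(m−k, e). -/
/-
For a self-dual basis `α` the Moore matrix `W = (α_j ^ q ^ s)` satisfies `Wᵀ W = 1`, since
`(Wᵀ W)_{ij} = ∑_s (α_i α_j) ^ q ^ s = Tr(α_i α_j)`. Hence its rows `w_0, …, w_{m-1}` form a basis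
of `F^m` in which the coordinates of `x` are the dot products `x ⬝ w_s`. The code `G_k(α)` is
spanned by `w_0, …, w_{k-1}`, and raising coordinates to the power `q^e` sends `w_i` to
`w_{(i+e) mod m}`, so `x` is `e`-orthogonal to `G_k(α)` iff its coordinates at the cyclic interval
`{(i+e) mod m : i < k}` vanish. The hull is therefore spanned by the `w_t` with `t < k` outside
that interval, i.e. `e + k - m ≤ t < e`, and there are `min (m - k) e` of them.
-/

/-- The Gabidulin code `G_k(α)`: the `F`-span of the vectors `α^{q^i}`, `i = 0, …, k-1`. -/
noncomputable def gab {F : Type*} [Field F] (q : ℕ) {m : ℕ} (k : ℕ) (α : Fin m → F) :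
    Submodule F (Fin m → F) :=
  Submodule.span F (Set.range fun i : Fin k => fun j : Fin m => α j ^ q ^ (i : ℕ))

/-- The `e`-Galois dual of a linear code `C ⊆ F^n`,
    with respect to the inner product `x ·_e y = ∑ i, x i * (y i)^(q^e)`. -/
def galoisDual {F : Type*} [Field F] (q e : ℕ) {n : ℕ} (C : Submodule F (Fin n → F)) :
    Submodule F (Fin n → F) where
  carrier := {x | ∀ c ∈ C, ∑ i, x i * c i ^ q ^ e = 0}
  add_mem' := by
    intro a b ha hb c hc
    simp only [Set.mem_setOf_eq] at *
    simp [Pi.add_apply, add_mul, Finset.sum_add_distrib, ha c hc, hb c hc]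
  zero_mem' := by
    intro c hc
    simp
  smul_mem' := by
    intro r a ha c hc
    simp only [Set.mem_setOf_eq] at *
    simp [Pi.smul_apply, smul_eq_mul, mul_assoc, ← Finset.mul_sum, ha c hc]

open Matrix Module Submodule

section RowBasis

variable {R ι : Type*} [CommRing R] [Fintype ι] [DecidableEq ι] {W : Matrix ι ι R}

noncomputable def Matrix.basisOfMulTransposeEqOne (h : W * Wᵀ = 1) : Basis ι R (ι → R) :=
  .ofEquivFun <| .ofLinearMap (toLin' W) (toLin' Wᵀ)
    (by rw [← toLin'_mul, h, toLin'_one]) (by rw [← toLin'_mul, mul_eq_one_comm.mp h, toLin'_one])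

theorem Matrix.coe_basisOfMulTransposeEqOne (h : W * Wᵀ = 1) :
    ⇑(basisOfMulTransposeEqOne h) = W := by
  ext i j
  simp [basisOfMulTransposeEqOne]

theorem Matrix.basisOfMulTransposeEqOne_repr_apply (h : W * Wᵀ = 1) (x : ι → R) (i : ι) :
    (basisOfMulTransposeEqOne h).repr x i = W i ⬝ᵥ x :=
  rfl

end RowBasis

namespace Module.Basis

variable {ι R M : Type*} [Ring R] [AddCommGroup M] [Module R M] (b : Basis ι R M)

theorem mem_span_image_diff_iff {s t : Set ι} {x : M} :
    x ∈ span R (b '' (s \ t)) ↔ x ∈ span R (b '' s) ∧ ∀ i ∈ t, b.repr x i = 0 := by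
  simp only [mem_span_image, Set.subset_sdiff, Set.disjoint_left, Finset.mem_coe,
    Finsupp.mem_support_iff]
  exact and_congr_right' (forall_congr' fun i => by tauto)

theorem finrank_span_image [Nontrivial R] [StrongRankCondition R] (s : Finset ι) :
    finrank R (span R (b '' s)) = s.card := by
  rw [Set.image_eq_range]
  exact (finrank_span_eq_card (b.linearIndependent.comp _ Subtype.val_injective)).trans (by simp)

end Module.Basis

theorem exists_lt_add_mod_eq_iff {m k e t : ℕ} (hk : k ≤ m) (he : e < m) (ht : t < m) :
    (∃ i < k, (i + e) % m = t) ↔ e ≤ t ∧ t < e + k ∨ t + m < e + k := by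
  constructor
  · rintro ⟨i, hi, rfl⟩
    rcases lt_or_ge (i + e) m with h | h
    · rw [Nat.mod_eq_of_lt h]
      omega
    · rw [Nat.mod_eq_sub_mod h, Nat.mod_eq_of_lt (by omega)]
      omega
  · rintro (⟨het, hte⟩ | h)
    · exact ⟨t - e, by omega, by rw [Nat.sub_add_cancel het, Nat.mod_eq_of_lt ht]⟩
    · exact ⟨t + m - e, by omega, by rw [Nat.sub_add_cancel (by omega), Nat.add_mod_right,
        Nat.mod_eq_of_lt ht]⟩

section FiniteField

open FiniteField

variable (K : Type*) {F : Type*} [Field K] [Fintype K] [Field F] [Algebra K F]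

theorem mem_galoisDual_span_iff {n : ℕ} (e : ℕ) (S : Set (Fin n → F)) (x : Fin n → F) :
    x ∈ galoisDual (Fintype.card K) e (span F S) ↔
      ∀ c ∈ S, ∑ i, x i * c i ^ Fintype.card K ^ e = 0 := by
  obtain ⟨φ, hφ⟩ : ∃ φ : F →+* F, ∀ a, a ^ Fintype.card K ^ e = φ a :=
    ⟨(frobeniusAlgHom K F ^ e).toRingHom, fun a => by
      simp [AlgHom.coe_pow, coe_frobeniusAlgHom, pow_iterate]⟩
  show (∀ c ∈ span F S, _) ↔ _
  simp only [hφ]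
  refine ⟨fun hx c hc => hx c (subset_span hc), fun hx c hc => ?_⟩
  induction hc using span_induction with
  | mem c hc => exact hx c hc
  | zero => simp
  | add c d _ _ hc hd => simp [mul_add, Finset.sum_add_distrib, hc, hd]
  | smul r c _ hc => simp [mul_left_comm (x _), ← Finset.mul_sum, hc]

theorem pow_card_pow_mod_finrank [Finite F] (x : F) (s : ℕ) :
    x ^ Fintype.card K ^ (s % finrank K F) = x ^ Fintype.card K ^ s := by
  simpa [AlgHom.coe_pow, coe_frobeniusAlgHom, pow_iterate, orderOf_frobeniusAlgHom]
    using congr($(pow_mod_orderOf (frobeniusAlgHom K F) s) x)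

end FiniteField

section Moore

open FiniteField

variable {F : Type*} [Field F]

def mooreMatrix (q : ℕ) {n : ℕ} (α : Fin n → F) : Matrix (Fin n) (Fin n) F :=
  of fun s j => α j ^ q ^ (s : ℕ)

variable {K : Type*} [Field K] [Fintype K] [Algebra K F] [Finite F]
  {α : Fin (finrank K F) → F} (hα : ∀ i j, Algebra.trace K F (α i * α j) = if i = j then 1 else 0)
include hα

theorem mooreMatrix_mul_transpose_eq_one :
    mooreMatrix (Fintype.card K) α * (mooreMatrix (Fintype.card K) α)ᵀ = 1 := by
  rw [mul_eq_one_comm]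
  ext i j
  have htrace := algebraMap_trace_eq_sum_pow K F (α i * α j)
  rw [hα, Nat.card_eq_fintype_card, ← Fin.sum_univ_eq_sum_range, apply_ite (algebraMap K F),
    map_one, map_zero] at htrace
  simpa [mul_apply, mooreMatrix, mul_pow, one_apply] using htrace.symm

noncomputable def mooreBasis : Basis (Fin (finrank K F)) F (Fin (finrank K F) → F) :=
  basisOfMulTransposeEqOne (mooreMatrix_mul_transpose_eq_one hα)

theorem mooreBasis_apply (s j : Fin (finrank K F)) :
    mooreBasis hα s j = α j ^ Fintype.card K ^ (s : ℕ) := by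
  simp [mooreBasis, coe_basisOfMulTransposeEqOne, mooreMatrix]

theorem mooreBasis_repr_apply (x : Fin (finrank K F) → F) (s : Fin (finrank K F)) :
    (mooreBasis hα).repr x s = ∑ j, x j * α j ^ Fintype.card K ^ (s : ℕ) := by
  simp [mooreBasis, basisOfMulTransposeEqOne_repr_apply, mooreMatrix, dotProduct, mul_comm]

theorem gab_eq_span_mooreBasis_image {k : ℕ} (hk : k ≤ finrank K F) :
    gab (Fintype.card K) k α = span F (mooreBasis hα '' {s | (s : ℕ) < k}) := by
  rw [gab, Set.image]
  congr 1
  ext v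
  constructor
  · rintro ⟨i, rfl⟩
    exact ⟨⟨i, i.2.trans_le hk⟩, i.2, funext (mooreBasis_apply hα _)⟩
  · rintro ⟨s, hs, rfl⟩
    exact ⟨⟨s, hs⟩, funext fun j => (mooreBasis_apply hα s j).symm⟩

theorem mem_galoisDual_gab_iff {k e : ℕ} (x : Fin (finrank K F) → F) :
    x ∈ galoisDual (Fintype.card K) e (gab (Fintype.card K) k α) ↔
      ∀ s ∈ {s : Fin (finrank K F) | ∃ i < k, (i + e) % finrank K F = s},
        (mooreBasis hα).repr x s = 0 := by
  have hshift (i : ℕ) (a : F) :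
      (a ^ Fintype.card K ^ i) ^ Fintype.card K ^ e =
        a ^ Fintype.card K ^ ((i + e) % finrank K F) := by
    rw [← pow_mul, ← pow_add, pow_card_pow_mod_finrank]
  simp only [gab, mem_galoisDual_span_iff, Set.forall_mem_range, hshift, mooreBasis_repr_apply]
  constructor
  · rintro h s ⟨i, hi, his⟩
    rw [← his]
    exact h ⟨i, hi⟩
  · intro h i
    exact h ⟨_, Nat.mod_lt _ finrank_pos⟩ ⟨i, i.2, rfl⟩

theorem gab_inf_galoisDual_gab_eq_span {k e : ℕ} (hk : k ≤ finrank K F) (he : e ≤ k)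
    (hen : e < finrank K F) :
    gab (Fintype.card K) k α ⊓ galoisDual (Fintype.card K) e (gab (Fintype.card K) k α) =
      span F (mooreBasis hα ''
        (Finset.Ico (⟨e + k - finrank K F, by omega⟩ : Fin _) ⟨e, hen⟩ : Set (Fin _))) := by
  ext x
  rw [mem_inf, mem_galoisDual_gab_iff hα, gab_eq_span_mooreBasis_image hα hk,
    ← (mooreBasis hα).mem_span_image_diff_iff]
  congr! 3
  ext s
  simp only [Set.mem_sdiff, Set.mem_ofPred_eq, exists_lt_add_mod_eq_iff hk hen s.2,
    Finset.coe_Ico, Set.mem_Ico, Fin.le_def, Fin.lt_def]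
  omega

end Moore

theorem hull_dim_gab_of_le_general
    (q m : ℕ)
    (K F : Type) [Field K] [Field F] [Algebra K F] [Fintype K] [Fintype F]
    (hK : Fintype.card K = q) (hF : Fintype.card F = q ^ m)
    (α : Fin m → F)
    (hsd : ∀ i j, Algebra.trace K F (α i * α j) = if i = j then 1 else 0)
    (k e : ℕ) (hk : k ≤ m) (he : e ≤ k) (hem : e ≤ m - 1) :
    Module.finrank F ↥(gab q k α ⊓ galoisDual q e (gab q k α)) = min (m - k) e := by
  subst hK
  obtain rfl : finrank K F = m :=
    Nat.pow_right_injective Fintype.one_lt_card (card_eq_pow_finrank.symm.trans hF)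
  have hen : e < finrank K F := by have := finrank_pos (R := K) (M := F); omega
  rw [gab_inf_galoisDual_gab_eq_span hsd hk he hen, (mooreBasis hsd).finrank_span_image,
    Fin.card_Ico]
  dsimp only
  omega

/-- For a self-dual basis `α` and `0 ≤ e ≤ k`, the `e`-Galois hull of `G_k(α)`
has dimension `min (m - k) e`. -/
theorem hull_dim_gab_of_le
    (q m : ℕ) (hq : IsPrimePow q) (hm : 0 < m)
    (K F : Type) [Field K] [Field F] [Algebra K F] [Fintype K] [Fintype F]
    (hK : Fintype.card K = q) (hF : Fintype.card F = q ^ m)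
    (α : Fin m → F) (hα : ∃ b : Module.Basis (Fin m) K F, ⇑b = α)
    (hsd : ∀ i j, Algebra.trace K F (α i * α j) = if i = j then 1 else 0)
    (k e : ℕ) (hk : k ≤ m) (he : e ≤ k) (hem : e ≤ m - 1) :
    Module.finrank F ↥(gab q k α ⊓ galoisDual q e (gab q k α)) = min (m - k) e :=
  hull_dim_gab_of_le_general q m K F hK hF α hsd k e hk he hem
end

section
/- Let α be a basis of F_{q^m} over F_q and let 1 ≤ k ≤ m. Then the Gabidulin code G_k(α) is an MDS code: its minimum Hamming distance equals m − k + 1, i.e., every nonzero codeword of G_k(α) has Hamming weight at least m − k + 1, and some nonzero codeword has Hamming weight exactly m − k + 1. -/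
open Polynomial FiniteField Module Finset

section LinearizedPolynomial

variable {F : Type*} [Field F] {k : ℕ}

noncomputable def linearizedPoly (q : ℕ) (c : Fin k → F) : F[X] :=
  ∑ i, C (c i) * X ^ q ^ (i : ℕ)

theorem eval_linearizedPoly {q : ℕ} (c : Fin k → F) (x : F) :
    (linearizedPoly q c).eval x = ∑ i, c i * x ^ q ^ (i : ℕ) := by
  simp [linearizedPoly, eval_finsetSum]

theorem coeff_linearizedPoly_pow {q : ℕ} (hq : 1 < q) (c : Fin k → F) (i : Fin k) :
    (linearizedPoly q c).coeff (q ^ (i : ℕ)) = c i := by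
  have hinj : Function.Injective fun j : Fin k => q ^ (j : ℕ) :=
    (Nat.pow_right_injective hq).comp Fin.val_injective
  simp [linearizedPoly, coeff_X_pow, hinj.eq_iff]

theorem linearizedPoly_ne_zero {q : ℕ} (hq : 1 < q) {c : Fin k → F} (hc : c ≠ 0) :
    linearizedPoly q c ≠ 0 := by
  obtain ⟨i, hi⟩ := Function.ne_iff.mp hc
  exact fun h => hi (by simpa [h] using (coeff_linearizedPoly_pow hq c i).symm)

theorem natDegree_linearizedPoly_le {q : ℕ} (hq : 0 < q) (c : Fin k → F) :
    (linearizedPoly q c).natDegree ≤ q ^ (k - 1) := by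
  refine natDegree_sum_le_of_forall_le _ _ fun i _ => (natDegree_C_mul_X_pow_le _ _).trans ?_
  exact Nat.pow_le_pow_right hq (by omega)

end LinearizedPolynomial

section LinearizedMap

variable (K : Type*) {F : Type*} [Field K] [Fintype K] [Field F] [Algebra K F] {k : ℕ}

noncomputable def linearizedMap (c : Fin k → F) : F →ₗ[K] F :=
  ∑ i, LinearMap.mulLeft K (c i) ∘ₗ ((frobeniusAlgHom K F) ^ (i : ℕ)).toLinearMap

theorem linearizedMap_apply (c : Fin k → F) (x : F) :
    linearizedMap K c x = (linearizedPoly (Fintype.card K) c).eval x := by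
  simp [linearizedMap, eval_linearizedPoly, AlgHom.coe_pow, coe_frobeniusAlgHom, pow_iterate]

theorem ker_linearizedMap_subset_rootSet {c : Fin k → F} (hc : c ≠ 0) :
    (LinearMap.ker (linearizedMap K c) : Set F) ⊆ (linearizedPoly (Fintype.card K) c).rootSet F :=
  fun x hx => by
    rw [mem_rootSet, coe_aeval_eq_eval, ← linearizedMap_apply]
    exact ⟨linearizedPoly_ne_zero Fintype.one_lt_card hc, hx⟩

theorem finite_ker_linearizedMap {c : Fin k → F} (hc : c ≠ 0) :
    Finite (LinearMap.ker (linearizedMap K c)) :=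
  ((rootSet_finite _ F).subset (ker_linearizedMap_subset_rootSet K hc)).to_subtype

theorem finrank_ker_linearizedMap_le {c : Fin k → F} (hc : c ≠ 0) :
    finrank K (LinearMap.ker (linearizedMap K c)) ≤ k - 1 := by
  set P := linearizedPoly (Fintype.card K) c
  have hq : 1 < Fintype.card K := Fintype.one_lt_card
  have := finite_ker_linearizedMap K hc
  have hcard : Fintype.card K ^ finrank K (LinearMap.ker (linearizedMap K c)) ≤
      Fintype.card K ^ (k - 1) := calc
    _ = Nat.card (LinearMap.ker (linearizedMap K c)) := by
      rw [Module.natCard_eq_pow_finrank (K := K), Nat.card_eq_fintype_card]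
    _ ≤ (P.rootSet F).ncard :=
      Set.ncard_le_ncard (ker_linearizedMap_subset_rootSet K hc) (P.rootSet_finite F)
    _ ≤ P.natDegree := P.ncard_rootSet_le F
    _ ≤ Fintype.card K ^ (k - 1) := natDegree_linearizedPoly_le (by omega) c
  exact (Nat.pow_le_pow_iff_right hq).mp hcard

end LinearizedMap

theorem LinearIndependent.card_filter_apply_eq_zero_le {K V W ι : Type*} [Field K]
    [AddCommGroup V] [Module K V] [AddCommGroup W] [Module K W] [DecidableEq W] [Fintype ι]
    {v : ι → V} (hv : LinearIndependent K v) (f : V →ₗ[K] W)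
    [FiniteDimensional K (LinearMap.ker f)] :
    #{i | f (v i) = 0} ≤ finrank K (LinearMap.ker f) := by
  set S := ({i | f (v i) = 0} : Finset ι)
  have hspan : Submodule.span K (Set.range (v ∘ ((↑) : S → ι))) ≤ LinearMap.ker f :=
    Submodule.span_le.mpr <| Set.range_subset_iff.mpr fun i : S => (mem_filter.mp i.2).2
  calc #S = finrank K (Submodule.span K (Set.range (v ∘ ((↑) : S → ι)))) := by
        rw [finrank_span_eq_card (hv.comp _ Subtype.val_injective), Fintype.card_coe]
    _ ≤ finrank K (LinearMap.ker f) := Submodule.finrank_mono hspan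

theorem hammingNorm_add_card_filter_eq_zero {ι β : Type*} [Fintype ι] [Zero β] [DecidableEq β]
    (x : ι → β) : hammingNorm x + #{i | x i = 0} = Fintype.card ι := by
  rw [add_comm, hammingNorm, card_filter_add_card_filter_not, card_univ]

theorem hammingNorm_add_card_le_of_forall_mem_eq_zero {ι β : Type*} [Fintype ι] [Zero β]
    [DecidableEq β] {x : ι → β} {s : Finset ι} (hx : ∀ i ∈ s, x i = 0) :
    hammingNorm x + #s ≤ Fintype.card ι := by
  rw [← hammingNorm_add_card_filter_eq_zero x]
  gcongr
  exact fun i hi => mem_filter.mpr ⟨mem_univ i, hx i hi⟩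

theorem exists_ne_zero_forall_mem_apply_eq_zero {F ι κ : Type*} [Field F] [Fintype κ]
    (f : (κ → F) →ₗ[F] ι → F) (s : Finset ι) (hs : #s < Fintype.card κ) :
    ∃ c ≠ 0, ∀ i ∈ s, f c i = 0 := by
  set g := (LinearMap.pi fun i : s => LinearMap.proj (R := F) (φ := fun _ => F) (i : ι)) ∘ₗ f
  have hker : LinearMap.ker g ≠ ⊥ := LinearMap.ker_ne_bot_of_finrank_lt (by simpa using hs)
  obtain ⟨c, hc, hc0⟩ := (Submodule.ne_bot_iff _).mp hker
  exact ⟨c, hc0, fun i hi => congrFun (LinearMap.mem_ker.mp hc) ⟨i, hi⟩⟩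

section Gabidulin

variable {F : Type*} [Field F] {m : ℕ}

noncomputable def gabEncode (q k : ℕ) (α : Fin m → F) : (Fin k → F) →ₗ[F] Fin m → F :=
  Fintype.linearCombination F fun i j => α j ^ q ^ (i : ℕ)

theorem range_gabEncode (q k : ℕ) (α : Fin m → F) :
    LinearMap.range (gabEncode q k α) = gab q k α :=
  Fintype.range_linearCombination F _

theorem gabEncode_apply {q k : ℕ} (α : Fin m → F) (c : Fin k → F) (j : Fin m) :
    gabEncode q k α c j = ∑ i, c i * α j ^ q ^ (i : ℕ) := by
  simp [gabEncode, Fintype.linearCombination_apply, Finset.sum_apply]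

variable {K : Type*} [Field K] [Fintype K] [Algebra K F] [DecidableEq F]

theorem card_filter_gabEncode_eq_zero_le {k : ℕ} {α : Fin m → F} (hα : LinearIndependent K α)
    {c : Fin k → F} (hc : c ≠ 0) :
    #{j | gabEncode (Fintype.card K) k α c j = 0} ≤ k - 1 := by
  have := finite_ker_linearizedMap K hc
  simp only [gabEncode_apply, ← eval_linearizedPoly, ← linearizedMap_apply]
  exact (hα.card_filter_apply_eq_zero_le _).trans (finrank_ker_linearizedMap_le K hc)

theorem le_hammingNorm_gabEncode {k : ℕ} {α : Fin m → F} (hα : LinearIndependent K α)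
    {c : Fin k → F} (hc : c ≠ 0) :
    m - (k - 1) ≤ hammingNorm (gabEncode (Fintype.card K) k α c) := by
  have hzeros := card_filter_gabEncode_eq_zero_le hα hc
  have hsum := hammingNorm_add_card_filter_eq_zero (gabEncode (Fintype.card K) k α c)
  rw [Fintype.card_fin] at hsum
  omega

end Gabidulin

theorem gab_mds_general
    (q m : ℕ)
    (K F : Type) [Field K] [Field F] [Algebra K F] [Fintype K]
    [DecidableEq F]
    (hK : Fintype.card K = q)
    (α : Fin m → F) (hα : ∃ b : Module.Basis (Fin m) K F, ⇑b = α)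
    (k : ℕ) (hk1 : 1 ≤ k) (hk2 : k ≤ m) :
    (∀ c ∈ gab q k α, c ≠ 0 → m - k + 1 ≤ hammingNorm c) ∧
      (∃ c ∈ gab q k α, c ≠ 0 ∧ hammingNorm c = m - k + 1) := by
  subst hK
  obtain ⟨b, rfl⟩ := hα
  have hlower (c : Fin k → F) (hc : c ≠ 0) := le_hammingNorm_gabEncode b.linearIndependent hc
  rw [← range_gabEncode]
  constructor
  · rintro _ ⟨c, rfl⟩ hne
    have hc : c ≠ 0 := by rintro rfl; exact hne (map_zero _)
    have hweight := hlower c hc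
    omega
  · obtain ⟨s, -, hs⟩ := exists_subset_card_eq (s := (univ : Finset (Fin m))) (n := k - 1)
      (by rw [card_univ, Fintype.card_fin]; omega)
    obtain ⟨c, hc, hzero⟩ :=
      exists_ne_zero_forall_mem_apply_eq_zero (gabEncode (Fintype.card K) k b) s
        (by rw [hs, Fintype.card_fin]; omega)
    have hupper := hammingNorm_add_card_le_of_forall_mem_eq_zero hzero
    rw [hs, Fintype.card_fin] at hupper
    have hweight := hlower c hc
    exact ⟨_, ⟨c, rfl⟩, hammingNorm_pos_iff.mp (by omega), by omega⟩

/-- The Gabidulin code `G_k(α)` is MDS: its minimum Hamming distance is `m - k + 1`. -/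
theorem gab_mds
    (q m : ℕ) (hq : IsPrimePow q) (hm : 0 < m)
    (K F : Type) [Field K] [Field F] [Algebra K F] [Fintype K] [Fintype F]
    [DecidableEq F]
    (hK : Fintype.card K = q) (hF : Fintype.card F = q ^ m)
    (α : Fin m → F) (hα : ∃ b : Module.Basis (Fin m) K F, ⇑b = α)
    (k : ℕ) (hk1 : 1 ≤ k) (hk2 : k ≤ m) :
    (∀ c ∈ gab q k α, c ≠ 0 → m - k + 1 ≤ hammingNorm c) ∧
      (∃ c ∈ gab q k α, c ≠ 0 ∧ hammingNorm c = m - k + 1) :=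
  gab_mds_general q m K F hK α hα k hk1 hk2
end
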